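/- Existence of a water-level: suppose for each s ∈ S, p_s(λ) = min(max(w_s/(λ ln 2 + t_s) − J_s/g_s, 0), P_s^mask) with all t_s > 0, and let F(λ) = Σ_s p_s(λ) for λ ≥ 0. If F(0) ≥ P^max and P^max ≥ 0, then there exists λ* ≥ 0 with F(λ*) = P^max; in particular F is continuous, nonincreasing, and tends to 0 as λ → ∞. -/

import Mathlib

open Finset Filter Set

/-!
Each clamped term is continuous and nonincreasing in the water level and vanishes as soon as
`w_s / (λ ln 2 + t_s) < J_s / g_s`. So `F` is eventually `0 ≤ P^max ≤ F 0`, and the intermediate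
value theorem on the connected set `[0, ∞)` produces the water level.
-/

noncomputable def channelPower (k w t c P l : ℝ) : ℝ :=
  min (max (w / (l * k + t) - c) 0) P

section channelPower

variable {k w t c P : ℝ}

lemma continuousOn_channelPower (hk : 0 ≤ k) (ht : 0 < t) :
    ContinuousOn (channelPower k w t c P) (Ici 0) := by
  have hden : ContinuousOn (fun l : ℝ => l * k + t) (Ici 0) := by fun_prop
  have hquot : ContinuousOn (fun l : ℝ => w / (l * k + t)) (Ici 0) :=
    continuousOn_const.div hden fun l hl => by
      have : 0 ≤ l * k := mul_nonneg hl hk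
      positivity
  exact ((hquot.sub continuousOn_const).sup continuousOn_const).inf continuousOn_const

lemma antitoneOn_channelPower (hk : 0 ≤ k) (hw : 0 ≤ w) (ht : 0 < t) :
    AntitoneOn (channelPower k w t c P) (Ici 0) := by
  intro a ha b _ hab
  have hden : 0 < a * k + t := by
    have : 0 ≤ a * k := mul_nonneg ha hk
    positivity
  have hquot : w / (b * k + t) ≤ w / (a * k + t) :=
    div_le_div_of_nonneg_left hw hden (by gcongr)
  unfold channelPower
  gcongr

lemma eventually_channelPower_eq_zero (hk : 0 < k) (hc : 0 < c) (hP : 0 ≤ P) :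
    ∀ᶠ l in atTop, channelPower k w t c P l = 0 := by
  have hden : Tendsto (fun l : ℝ => l * k + t) atTop atTop :=
    tendsto_atTop_add_const_right _ _ (tendsto_id.atTop_mul_const hk)
  have hquot : ∀ᶠ l in atTop, w / (l * k + t) < c :=
    (tendsto_const_nhds.div_atTop hden).eventually_lt_const hc
  filter_upwards [hquot] with l hl
  rw [channelPower, max_eq_right (sub_nonpos.2 hl.le), min_eq_left hP]

end channelPower

/-- Existence of a water-level. With
`p_s(λ) = clamp(w_s/(λ ln 2 + t_s) − J_s/g_s, 0, P_s^mask)` (all `t_s > 0`) and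
`F(λ) = ∑_s p_s(λ)`, if `F(0) ≥ Pmax ≥ 0` then there exists `λ* ≥ 0` with
`F(λ*) = Pmax`; moreover `F` is continuous and nonincreasing on `[0,∞)` and
tends to `0` as `λ → ∞`. -/
theorem waterlevel_exists
    {S : Type} [Fintype S]
    (w t J g Pmask : S → ℝ)
    (hw : ∀ s, 0 < w s) (ht : ∀ s, 0 < t s) (hJ : ∀ s, 0 < J s)
    (hg : ∀ s, 0 < g s) (hP : ∀ s, 0 ≤ Pmask s)
    (PMAX : ℝ) (hPMAX : 0 ≤ PMAX)
    (F : ℝ → ℝ)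
    (hF : ∀ l, F l = ∑ s : S,
      min (max (w s / (l * Real.log 2 + t s) - J s / g s) 0) (Pmask s))
    (hF0 : PMAX ≤ F 0) :
    (∃ lstar : ℝ, 0 ≤ lstar ∧ F lstar = PMAX) ∧
    ContinuousOn F (Set.Ici 0) ∧
    AntitoneOn F (Set.Ici 0) ∧
    Tendsto F atTop (nhds 0) := by
  have hlog : 0 < Real.log 2 := Real.log_pos one_lt_two
  have hF' : ∀ l, F l = ∑ s, channelPower (Real.log 2) (w s) (t s) (J s / g s) (Pmask s) l := hF
  have hcont : ContinuousOn F (Ici 0) :=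
    (continuousOn_finsetSum _ fun s _ => continuousOn_channelPower hlog.le (ht s)).congr
      fun l _ => hF' l
  have hanti : AntitoneOn F (Ici 0) := fun a ha b hb hab => by
    rw [hF', hF']
    exact sum_le_sum fun s _ => antitoneOn_channelPower hlog.le (hw s).le (ht s) ha hb hab
  have hzero : ∀ᶠ l in atTop, F l = 0 := by
    filter_upwards [eventually_all.2 fun s =>
      eventually_channelPower_eq_zero hlog (div_pos (hJ s) (hg s)) (hP s)] with l hl
    rw [hF']
    exact sum_eq_zero fun s _ => hl s
  obtain ⟨L, hFL, hL⟩ := (hzero.and (eventually_ge_atTop 0)).exists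
  obtain ⟨lstar, hlstar, hFlstar⟩ := isPreconnected_Ici.intermediate_value hL self_mem_Ici hcont
    ⟨hFL ▸ hPMAX, hF0⟩
  exact ⟨⟨lstar, hlstar, hFlstar⟩, hcont, hanti,
    tendsto_const_nhds.congr' (hzero.mono fun _ h => h.symm)⟩
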